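/- Suppose the implication (II)_{m−1} holds: for all signals d, u, y, if α_tot(d(k−m_tot:k)) ≤ 0 for k = m_tot,…,m, γ₁(d(k−m₁:k), u(k−m₁:k−1), y(k−m₁:k)) ≤ 0 for k = m₁,…,m, and γ₂(y(k−m₁:k), u(k−m₁:k)) ≤ 0 for k = m₂,…,m, then γ_tot(d(ℓ−m_tot:ℓ), y(ℓ−m_tot:ℓ)) ≤ 0 for all ℓ = m_tot,…,m. Then for every n ≥ m−1, the analogous implication (II)_n with horizon n+1 in place of m holds: the three families of hypotheses up to time n+1 imply γ_tot(d(ℓ−m_tot:ℓ), y(ℓ−m_tot:ℓ)) ≤ 0 for all ℓ = m_tot,…,n+1. -/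
import Mathlib


/-- The window `s(k-p : k)` of an infinite signal `s : ℕ → ℝ^{nd}`. -/
def win {nd : ℕ} (s : ℕ → Fin nd → ℝ) (p k : ℕ) : Fin (p + 1) → Fin nd → ℝ :=
  fun i => s (k - p + (i : ℕ))

/-- The window `s(k-p : k-1)` of an infinite signal `s : ℕ → ℝ^{nd}`. -/
def win' {nd : ℕ} (s : ℕ → Fin nd → ℝ) (p k : ℕ) : Fin p → Fin nd → ℝ :=
  fun i => s (k - p + (i : ℕ))

/-- The implication (II) with horizon `N` : if the assumptions `α_tot ≤ 0`,
`γ₁ ≤ 0` and `γ₂ ≤ 0` all hold up to time `N`, then the guarantee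
`γ_tot ≤ 0` holds up to time `N`. -/
def ImplII (nd m₁ m₂ mtot : ℕ)
    (αtot : (Fin (mtot + 1) → Fin nd → ℝ) → ℝ)
    (γ₁ : (Fin (m₁ + 1) → Fin nd → ℝ) → (Fin m₁ → Fin nd → ℝ) →
          (Fin (m₁ + 1) → Fin nd → ℝ) → ℝ)
    (γ₂ : (Fin (m₁ + 1) → Fin nd → ℝ) → (Fin (m₁ + 1) → Fin nd → ℝ) → ℝ)
    (γtot : (Fin (mtot + 1) → Fin nd → ℝ) → (Fin (mtot + 1) → Fin nd → ℝ) → ℝ)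
    (N : ℕ) : Prop :=
  ∀ d u y : ℕ → Fin nd → ℝ,
    (∀ k, mtot ≤ k → k ≤ N → αtot (win d mtot k) ≤ 0) →
    (∀ k, m₁ ≤ k → k ≤ N → γ₁ (win d m₁ k) (win' u m₁ k) (win y m₁ k) ≤ 0) →
    (∀ k, m₂ ≤ k → k ≤ N → γ₂ (win y m₁ k) (win u m₁ k) ≤ 0) →
    ∀ ℓ, mtot ≤ ℓ → ℓ ≤ N → γtot (win d mtot ℓ) (win y mtot ℓ) ≤ 0

lemma win_shift {nd : ℕ} (s : ℕ → Fin nd → ℝ) (p k : ℕ) (h : p ≤ k) :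
    win (fun t => s (t + 1)) p k = win s p (k + 1) := by
  funext i x
  have h2 : k - p + (i : ℕ) + 1 = k + 1 - p + (i : ℕ) := by omega
  simp [win, h2]

lemma win'_shift {nd : ℕ} (s : ℕ → Fin nd → ℝ) (p k : ℕ) (h : p ≤ k) :
    win' (fun t => s (t + 1)) p k = win' s p (k + 1) := by
  funext i x
  have h2 : k - p + (i : ℕ) + 1 = k + 1 - p + (i : ℕ) := by omega
  simp [win', h2]

lemma win_shift_small {nd : ℕ} (s : ℕ → Fin nd → ℝ) (p k : ℕ) (h : k ≤ p) :
    win (fun t => s (t + 1)) p k = win s p (p + 1) := by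
  funext i x
  have h2 : k - p + (i : ℕ) + 1 = p + 1 - p + (i : ℕ) := by omega
  simp [win, h2]

lemma II_step (nd m₁ m₂ mtot : ℕ)
    (αtot : (Fin (mtot + 1) → Fin nd → ℝ) → ℝ)
    (γ₁ : (Fin (m₁ + 1) → Fin nd → ℝ) → (Fin m₁ → Fin nd → ℝ) →
          (Fin (m₁ + 1) → Fin nd → ℝ) → ℝ)
    (γ₂ : (Fin (m₁ + 1) → Fin nd → ℝ) → (Fin (m₁ + 1) → Fin nd → ℝ) → ℝ)
    (γtot : (Fin (mtot + 1) → Fin nd → ℝ) → (Fin (mtot + 1) → Fin nd → ℝ) → ℝ)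
    (N : ℕ) (hm₁ : m₁ ≤ N) (hmtot : mtot ≤ N)
    (IH : ImplII nd m₁ m₂ mtot αtot γ₁ γ₂ γtot N) :
    ImplII nd m₁ m₂ mtot αtot γ₁ γ₂ γtot (N + 1) := by
  intro d u y hα hγ₁ hγ₂ ℓ hℓ hℓN
  rcases Nat.lt_or_ge ℓ (N + 1) with h | h
  · exact IH d u y (fun k h1 h2 => hα k h1 (h2.trans (Nat.le_succ N)))
      (fun k h1 h2 => hγ₁ k h1 (h2.trans (Nat.le_succ N)))
      (fun k h1 h2 => hγ₂ k h1 (h2.trans (Nat.le_succ N)))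
      ℓ hℓ (Nat.lt_succ_iff.mp h)
  · have hℓ' : ℓ = N + 1 := le_antisymm hℓN h
    subst hℓ'
    have key := IH (fun t => d (t + 1)) (fun t => u (t + 1)) (fun t => y (t + 1))
      (fun k h1 h2 => by
        rw [win_shift d mtot k h1]
        exact hα (k + 1) (by omega) (by omega))
      (fun k h1 h2 => by
        rw [win_shift d m₁ k h1, win'_shift u m₁ k h1, win_shift y m₁ k h1]
        exact hγ₁ (k + 1) (by omega) (by omega))
      (fun k h1 h2 => by
        rcases le_or_gt m₁ k with hk | hk
        · rw [win_shift y m₁ k hk, win_shift u m₁ k hk]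
          exact hγ₂ (k + 1) (by omega) (by omega)
        · rw [win_shift_small y m₁ k hk.le, win_shift_small u m₁ k hk.le]
          exact hγ₂ (m₁ + 1) (by omega) (by omega))
      N hmtot le_rfl
    rwa [win_shift d mtot N hmtot, win_shift y mtot N hmtot] at key

/-- If the implication (II)_{m-1}, with horizon `m`, holds, then for every
`n ≥ m - 1` the implication (II)_n, with horizon `n + 1`, holds. -/
theorem II_induction_truncation
    (nd m₁ m₂ mtot m : ℕ) (hm₁ : m₁ ≤ m) (hm₂ : m₂ ≤ m) (hmtot : mtot ≤ m)
    (αtot : (Fin (mtot + 1) → Fin nd → ℝ) → ℝ)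
    (γ₁ : (Fin (m₁ + 1) → Fin nd → ℝ) → (Fin m₁ → Fin nd → ℝ) →
          (Fin (m₁ + 1) → Fin nd → ℝ) → ℝ)
    (γ₂ : (Fin (m₁ + 1) → Fin nd → ℝ) → (Fin (m₁ + 1) → Fin nd → ℝ) → ℝ)
    (γtot : (Fin (mtot + 1) → Fin nd → ℝ) → (Fin (mtot + 1) → Fin nd → ℝ) → ℝ)
    (base : ImplII nd m₁ m₂ mtot αtot γ₁ γ₂ γtot m) :
    ∀ n, m - 1 ≤ n → ImplII nd m₁ m₂ mtot αtot γ₁ γ₂ γtot (n + 1) := by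
  intro n hn
  induction n with
  | zero =>
      -- here m ≤ 1
      have hub : m ≤ 1 := by omega
      interval_cases m
      · exact II_step nd m₁ m₂ mtot αtot γ₁ γ₂ γtot 0 (by omega) (by omega) base
      · exact base
  | succ k IHk =>
      rcases le_or_gt (m - 1) k with hk | hk
      · exact II_step nd m₁ m₂ mtot αtot γ₁ γ₂ γtot (k + 1) (by omega) (by omega)
          (IHk hk)
      · -- m - 1 = k + 1, so m = k + 2
        have hmk : m = k + 2 := by omega
        rw [show k + 1 + 1 = m by omega]
        exact base
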